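/- arXiv:0801.1620 — 6 statements merged into one kernel-verified Lean document; each statement's English description precedes it below -/
import Mathlib

section
/- Fix an integer r ≥ 3 and let I = {0, 1/2, 1, ..., (r-2)/2}. Call a triple (i,j,k) ∈ I³ admissible if i ≤ j+k, j ≤ k+i, k ≤ i+j, i+j+k ∈ ℕ, and i+j+k ≤ r-2. Then for any admissible triples (i,j,k) and (i,m,n) sharing the entry i, there exists l ∈ I such that both (j,m,l) and (k,n,l) are admissible. -/
/-!
Take `l = max |j - m| |k - n|`. Being at least `|j - m|` and `|k - n|`, it satisfies two of the
triangle inequalities of each of `(j, m, l)` and `(k, n, l)` for free; the remaining ones, and the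
bounds on the sums, follow from the triangle inequalities and sum bounds of the two given triples
(for instance `k - n ≤ (i + j) - (i - m) = j + m`). Integrality of the new sums comes from identities
such as `j + m + (k - n) = (i + j + k) - (i + m + n) + 2 m`.
-/

/-- Membership in the color set `I = {0, 1/2, 1, ..., (r-2)/2}` of half-integers. -/
def TVColor (r : ℕ) (x : ℚ) : Prop :=
  (∃ n : ℕ, x = (n : ℚ) / 2) ∧ x ≤ ((r : ℚ) - 2) / 2

/-- Admissibility of a triple for the Turaev–Viro datum of order `r`:
triangle inequalities, integral sum, and sum at most `r - 2`. -/
def TVAdm (r : ℕ) (a b c : ℚ) : Prop :=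
  a ≤ b + c ∧ b ≤ c + a ∧ c ≤ a + b ∧
    (∃ n : ℕ, a + b + c = (n : ℚ)) ∧ a + b + c ≤ (r : ℚ) - 2

section Triangle

variable {α : Type*} [Field α] [LinearOrder α] [IsStrictOrderedRing α] {a b c : α}

def IsTriangle (a b c : α) : Prop :=
  a ≤ b + c ∧ b ≤ c + a ∧ c ≤ a + b

lemma IsTriangle.swap_right (h : IsTriangle a b c) : IsTriangle a c b :=
  ⟨by linarith [h.1], by linarith [h.2.2], by linarith [h.2.1]⟩

lemma IsTriangle.add_add_nonneg (h : IsTriangle a b c) : 0 ≤ a + b + c := by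
  obtain ⟨ha, hb, hc⟩ := h
  linarith

lemma IsTriangle.two_mul_right_le {s : α} (h : IsTriangle a b c) (hs : a + b + c ≤ s) :
    2 * c ≤ s := by
  linarith [h.2.2]

lemma exists_natCast_of_intCast_of_nonneg {x : α} {z : ℤ} (hx : x = z) (h0 : 0 ≤ x) :
    ∃ N : ℕ, x = N := by
  obtain ⟨N, rfl⟩ := Int.eq_ofNat_of_zero_le (a := z) (by exact_mod_cast hx ▸ h0)
  exact ⟨N, by exact_mod_cast hx⟩

variable {i j k m n : α}

lemma isTriangle_max_abs_sub (h₁ : IsTriangle i j k) (h₂ : IsTriangle i m n) :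
    IsTriangle j m (max |j - m| |k - n|) := by
  obtain ⟨hi₁, hj₁, hk₁⟩ := h₁
  obtain ⟨hi₂, hm₂, hn₂⟩ := h₂
  have hjm := abs_le.1 (le_max_left |j - m| |k - n|)
  refine ⟨by linarith, by linarith, max_le ?_ ?_⟩
  · exact abs_sub_le_iff.2 ⟨by linarith, by linarith⟩
  · exact abs_sub_le_iff.2 ⟨by linarith, by linarith⟩

lemma add_add_max_abs_sub_le {s : α} (h₁ : IsTriangle i j k) (h₂ : IsTriangle i m n)
    (hj : 2 * j ≤ s) (hm : 2 * m ≤ s) (hs₁ : i + j + k ≤ s) (hs₂ : i + m + n ≤ s) :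
    j + m + max |j - m| |k - n| ≤ s := by
  have hjm : |j - m| ≤ s - (j + m) := abs_sub_le_iff.2 ⟨by linarith, by linarith⟩
  have hkn : |k - n| ≤ s - (j + m) :=
    abs_sub_le_iff.2 ⟨by linarith [h₁.2.2, h₂.2.1], by linarith [h₁.2.1, h₂.2.2]⟩
  linarith [max_le hjm hkn]

lemma exists_intCast_add_add_max_abs_sub {a b p q : ℤ} (hj : 2 * j = a) (hm : 2 * m = b)
    (hp : i + j + k = p) (hq : i + m + n = q) :
    ∃ z : ℤ, j + m + max |j - m| |k - n| = z := by
  rcases max_choice |j - m| |k - n| with h | h <;> rw [h]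
  · rcases abs_choice (j - m) with h | h <;> rw [h]
    · exact ⟨a, by linarith⟩
    · exact ⟨b, by linarith⟩
  · rcases abs_choice (k - n) with h | h <;> rw [h]
    · exact ⟨p - q + b, by push_cast; linarith⟩
    · exact ⟨q - p + a, by push_cast; linarith⟩

end Triangle

section TuraevViro

variable {r : ℕ} {a b c : ℚ}

lemma TVColor.exists_two_mul_eq {x : ℚ} (h : TVColor r x) : ∃ z : ℤ, 2 * x = z := by
  obtain ⟨⟨N, rfl⟩, -⟩ := h
  exact ⟨N, by push_cast; ring⟩

lemma TVColor.two_mul_le {x : ℚ} (h : TVColor r x) : 2 * x ≤ r - 2 := by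
  linarith [h.2]

lemma TVAdm.isTriangle (h : TVAdm r a b c) : IsTriangle a b c :=
  ⟨h.1, h.2.1, h.2.2.1⟩

lemma TVAdm.exists_add_add_eq (h : TVAdm r a b c) : ∃ z : ℤ, a + b + c = z := by
  obtain ⟨N, hN⟩ := h.2.2.2.1
  exact ⟨N, by exact_mod_cast hN⟩

lemma TVAdm.add_add_le (h : TVAdm r a b c) : a + b + c ≤ r - 2 :=
  h.2.2.2.2

lemma TVAdm.of_isTriangle (h : IsTriangle a b c) {z : ℤ} (hz : a + b + c = z)
    (hs : a + b + c ≤ r - 2) : TVAdm r a b c :=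
  ⟨h.1, h.2.1, h.2.2, exists_natCast_of_intCast_of_nonneg hz h.add_add_nonneg, hs⟩

lemma TVAdm.tvColor_right (h : TVAdm r a b c) (ha : TVColor r a)
    (hb : TVColor r b) : TVColor r c := by
  obtain ⟨p, hp⟩ := h.exists_add_add_eq
  obtain ⟨x, hx⟩ := ha.exists_two_mul_eq
  obtain ⟨y, hy⟩ := hb.exists_two_mul_eq
  have hc : 0 ≤ 2 * c := by linarith [h.1, h.2.1]
  obtain ⟨N, hN⟩ := exists_natCast_of_intCast_of_nonneg
    (show 2 * c = ((2 * p - x - y : ℤ) : ℚ) by push_cast; linarith) hc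
  refine ⟨⟨N, by linarith⟩, ?_⟩
  linarith [h.isTriangle.two_mul_right_le h.add_add_le]

lemma TVAdm.swap_right (h : TVAdm r a b c) : TVAdm r a c b := by
  obtain ⟨z, hz⟩ := h.exists_add_add_eq
  exact .of_isTriangle h.isTriangle.swap_right (z := z) (by linarith) (by linarith [h.add_add_le])

lemma TVAdm.max_abs_sub {i j k m n : ℚ} (h₁ : TVAdm r i j k) (h₂ : TVAdm r i m n)
    (hj : TVColor r j) (hm : TVColor r m) : TVAdm r j m (max |j - m| |k - n|) := by
  obtain ⟨a, ha⟩ := hj.exists_two_mul_eq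
  obtain ⟨b, hb⟩ := hm.exists_two_mul_eq
  obtain ⟨p, hp⟩ := h₁.exists_add_add_eq
  obtain ⟨q, hq⟩ := h₂.exists_add_add_eq
  obtain ⟨z, hz⟩ := exists_intCast_add_add_max_abs_sub ha hb hp hq
  exact .of_isTriangle (isTriangle_max_abs_sub h₁.isTriangle h₂.isTriangle) hz
    (add_add_max_abs_sub_le h₁.isTriangle h₂.isTriangle hj.two_mul_le hm.two_mul_le
      h₁.add_add_le h₂.add_add_le)

end TuraevViro

theorem tv_strong_irreducibility_ii_general (r : ℕ) (i j k m n : ℚ)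
    (hj : TVColor r j) (hk : TVColor r k)
    (hm : TVColor r m) (hn : TVColor r n)
    (h1 : TVAdm r i j k) (h2 : TVAdm r i m n) :
    ∃ l : ℚ, TVColor r l ∧ TVAdm r j m l ∧ TVAdm r k n l := by
  have hjm := h1.max_abs_sub h2 hj hm
  have hkn := h1.swap_right.max_abs_sub h2.swap_right hk hn
  rw [max_comm] at hkn
  exact ⟨_, hjm.tvColor_right hj hm, hjm, hkn⟩

/-- Condition (ii) of strong irreducibility for the Turaev–Viro datum of order `r`:
given admissible triples `(i,j,k)` and `(i,m,n)` sharing the entry `i`, there is a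
color `l` such that `(j,m,l)` and `(k,n,l)` are admissible. -/
theorem tv_strong_irreducibility_ii (r : ℕ) (hr : 3 ≤ r) (i j k m n : ℚ)
    (hi : TVColor r i) (hj : TVColor r j) (hk : TVColor r k)
    (hm : TVColor r m) (hn : TVColor r n)
    (h1 : TVAdm r i j k) (h2 : TVAdm r i m n) :
    ∃ l : ℚ, TVColor r l ∧ TVAdm r j m l ∧ TVAdm r k n l :=
  tv_strong_irreducibility_ii_general r i j k m n hj hk hm hn h1 h2
end

section
/- Fix an integer r ≥ 3 and let I = {0, 1/2, 1, ..., (r-2)/2} with admissibility of a triple (i,j,k) defined by the triangle inequalities, i+j+k ∈ ℕ, and i+j+k ≤ r-2. Suppose the seven triples (i,j,k), (i,i₁,k₁), (i,i₂,k₂), (j,i₁,j₁), (j,i₂,j₂), (k,j₁,k₁), (k,j₂,k₂) are all admissible. Then there exists l ∈ I such that the triples (i₁,i₂,l), (j₁,j₂,l), and (k₁,k₂,l) are all admissible. -/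
/-!
By symmetry we may assume that `i₂ ≤ i₁` and that `i₁ - i₂` is the largest of the differences
`|i₁ - i₂|`, `|j₁ - j₂|`, `|k₁ - k₂|`; then `l = i₁ - i₂` works. The triangle inequalities for
`(j₁, j₂, l)` come from `i₁ ≤ j + j₁` and `j ≤ i₂ + j₂`, and its sum is at most `r - 2` because
`j₂ - i₂ ≤ j` and `j + i₁ + j₁ ≤ r - 2`. Its sum is an integer because it differs from
`(j + i₁ + j₁) + (j + i₂ + j₂)` by `2j + 2i₂`. The triple `(k₁, k₂, l)` is handled in the same
way through `i`.
-/

lemma exists_nat_eq_of_int {x : ℚ} {m : ℤ} (hm : x = m) (hx : 0 ≤ x) : ∃ n : ℕ, x = n := by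
  lift m to ℕ using (by rw [hm] at hx; exact_mod_cast hx)
  exact ⟨m, by simpa using hm⟩

namespace TVColor

variable {r : ℕ} {x : ℚ}

lemma nonneg (h : TVColor r x) : 0 ≤ x := by
  obtain ⟨⟨n, rfl⟩, -⟩ := h
  positivity

lemma exists_two_mul_eq_s5 (h : TVColor r x) : ∃ m : ℤ, 2 * x = m := by
  obtain ⟨⟨n, rfl⟩, -⟩ := h
  exact ⟨n, by push_cast; ring⟩

lemma of_two_mul_eq {m : ℤ} (hm : 2 * x = m) (h0 : 0 ≤ x) (hle : x ≤ ((r : ℚ) - 2) / 2) :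
    TVColor r x := by
  obtain ⟨n, hn⟩ := exists_nat_eq_of_int hm (by linarith)
  exact ⟨⟨n, by rw [← hn]; ring⟩, hle⟩

end TVColor

namespace TVAdm

variable {r : ℕ} {a b c : ℚ}

/-- The triangle inequalities force `a + b + c ≥ 0`, so an integral sum is a natural number. -/
lemma of_int {m : ℤ} (hab : a ≤ b + c) (hbc : b ≤ c + a) (hca : c ≤ a + b)
    (hm : a + b + c = m) (hle : a + b + c ≤ (r : ℚ) - 2) : TVAdm r a b c :=
  ⟨hab, hbc, hca, exists_nat_eq_of_int hm (by linarith), hle⟩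

lemma swap (h : TVAdm r a b c) : TVAdm r b a c := by
  obtain ⟨h₁, h₂, h₃, ⟨n, hn⟩, hle⟩ := h
  exact ⟨by linarith, by linarith, by linarith, ⟨n, by linarith⟩, by linarith⟩

lemma rotate (h : TVAdm r a b c) : TVAdm r b c a := by
  obtain ⟨h₁, h₂, h₃, ⟨n, hn⟩, hle⟩ := h
  exact ⟨h₂, h₃, h₁, ⟨n, by linarith⟩, by linarith⟩

lemma swap₂₃ (h : TVAdm r a b c) : TVAdm r a c b :=
  h.rotate.rotate.swap

end TVAdm

section Fusion

variable {r : ℕ}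

lemma tvAdm_sub_of_le {b₁ b₂ : ℚ} (hb₁ : TVColor r b₁) (hb₂ : TVColor r b₂) (hle : b₂ ≤ b₁) :
    TVAdm r b₁ b₂ (b₁ - b₂) := by
  obtain ⟨m, hm⟩ := hb₁.exists_two_mul_eq_s5
  have := hb₂.nonneg
  exact TVAdm.of_int (m := m) (by linarith) (by linarith) (by linarith) (by linarith)
    (by linarith [hb₁.2])

lemma tvColor_sub_of_le {b₁ b₂ : ℚ} (hb₁ : TVColor r b₁) (hb₂ : TVColor r b₂) (hle : b₂ ≤ b₁) :
    TVColor r (b₁ - b₂) := by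
  obtain ⟨m₁, hm₁⟩ := hb₁.exists_two_mul_eq_s5
  obtain ⟨m₂, hm₂⟩ := hb₂.exists_two_mul_eq_s5
  exact .of_two_mul_eq (m := m₁ - m₂) (by push_cast; linarith) (by linarith)
    (by linarith [hb₁.2, hb₂.nonneg])

lemma TVAdm.sub_of_abs_sub_le {a b₁ b₂ c₁ c₂ : ℚ} (ha : TVColor r a) (hb₂ : TVColor r b₂)
    (h₁ : TVAdm r a b₁ c₁) (h₂ : TVAdm r a b₂ c₂) (hc : |c₁ - c₂| ≤ b₁ - b₂) :
    TVAdm r c₁ c₂ (b₁ - b₂) := by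
  obtain ⟨hc₁, hc₂⟩ := abs_sub_le_iff.mp hc
  obtain ⟨ma, hma⟩ := ha.exists_two_mul_eq_s5
  obtain ⟨mb, hmb⟩ := hb₂.exists_two_mul_eq_s5
  obtain ⟨-, h₁b, -, ⟨n₁, hn₁⟩, h₁s⟩ := h₁
  obtain ⟨h₂a, -, h₂c, ⟨n₂, hn₂⟩, -⟩ := h₂
  exact of_int (m := n₁ + n₂ - ma - mb) (by linarith) (by linarith) (by linarith)
    (by push_cast; linarith) (by linarith)

variable {i j k i₁ i₂ j₁ j₂ k₁ k₂ : ℚ}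

lemma exists_tvAdm_of_sub_le (hi : TVColor r i) (hj : TVColor r j)
    (hi₁ : TVColor r i₁) (hi₂ : TVColor r i₂)
    (h2 : TVAdm r i i₁ k₁) (h3 : TVAdm r i i₂ k₂) (h4 : TVAdm r j i₁ j₁) (h5 : TVAdm r j i₂ j₂)
    (hle : i₂ ≤ i₁) (hj' : |j₁ - j₂| ≤ i₁ - i₂) (hk' : |k₁ - k₂| ≤ i₁ - i₂) :
    ∃ l : ℚ, TVColor r l ∧ TVAdm r i₁ i₂ l ∧ TVAdm r j₁ j₂ l ∧ TVAdm r k₁ k₂ l :=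
  ⟨i₁ - i₂, tvColor_sub_of_le hi₁ hi₂ hle, tvAdm_sub_of_le hi₁ hi₂ hle,
    h4.sub_of_abs_sub_le hj hi₂ h5 hj', h2.sub_of_abs_sub_le hi hi₂ h3 hk'⟩

lemma exists_tvAdm_of_abs_sub_le (hi : TVColor r i) (hj : TVColor r j)
    (hi₁ : TVColor r i₁) (hi₂ : TVColor r i₂)
    (h2 : TVAdm r i i₁ k₁) (h3 : TVAdm r i i₂ k₂) (h4 : TVAdm r j i₁ j₁) (h5 : TVAdm r j i₂ j₂)
    (hj' : |j₁ - j₂| ≤ |i₁ - i₂|) (hk' : |k₁ - k₂| ≤ |i₁ - i₂|) :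
    ∃ l : ℚ, TVColor r l ∧ TVAdm r i₁ i₂ l ∧ TVAdm r j₁ j₂ l ∧ TVAdm r k₁ k₂ l := by
  rcases le_total i₂ i₁ with hle | hle
  · rw [abs_of_nonneg (sub_nonneg.mpr hle)] at hj' hk'
    exact exists_tvAdm_of_sub_le hi hj hi₁ hi₂ h2 h3 h4 h5 hle hj' hk'
  · rw [abs_sub_comm i₁, abs_of_nonneg (sub_nonneg.mpr hle)] at hj' hk'
    rw [abs_sub_comm] at hj' hk'
    obtain ⟨l, hl, hil, hjl, hkl⟩ := exists_tvAdm_of_sub_le hi hj hi₂ hi₁ h3 h2 h5 h4 hle hj' hk'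
    exact ⟨l, hl, hil.swap, hjl.swap, hkl.swap⟩

end Fusion

theorem tv_strong_irreducibility_iii_general (r : ℕ)
    (i j k i₁ i₂ j₁ j₂ k₁ k₂ : ℚ)
    (hi : TVColor r i) (hj : TVColor r j) (hk : TVColor r k)
    (hi₁ : TVColor r i₁) (hi₂ : TVColor r i₂) (hj₁ : TVColor r j₁)
    (hj₂ : TVColor r j₂) (hk₁ : TVColor r k₁) (hk₂ : TVColor r k₂)
    (h2 : TVAdm r i i₁ k₁) (h3 : TVAdm r i i₂ k₂)
    (h4 : TVAdm r j i₁ j₁) (h5 : TVAdm r j i₂ j₂)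
    (h6 : TVAdm r k j₁ k₁) (h7 : TVAdm r k j₂ k₂) :
    ∃ l : ℚ, TVColor r l ∧ TVAdm r i₁ i₂ l ∧ TVAdm r j₁ j₂ l ∧ TVAdm r k₁ k₂ l := by
  have largest_k (hi' : |i₁ - i₂| ≤ |k₁ - k₂|) (hj' : |j₁ - j₂| ≤ |k₁ - k₂|) :
      ∃ l : ℚ, TVColor r l ∧ TVAdm r i₁ i₂ l ∧ TVAdm r j₁ j₂ l ∧ TVAdm r k₁ k₂ l := by
    obtain ⟨l, hl, hkl, hil, hjl⟩ := exists_tvAdm_of_abs_sub_le hk hi hk₁ hk₂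
      h6.swap₂₃ h7.swap₂₃ h2.swap₂₃ h3.swap₂₃ hi' hj'
    exact ⟨l, hl, hil, hjl, hkl⟩
  rcases le_total |j₁ - j₂| |i₁ - i₂| with hji | hij
  · rcases le_total |k₁ - k₂| |i₁ - i₂| with hki | hik
    · exact exists_tvAdm_of_abs_sub_le hi hj hi₁ hi₂ h2 h3 h4 h5 hji hki
    · exact largest_k hik (hji.trans hik)
  · rcases le_total |k₁ - k₂| |j₁ - j₂| with hkj | hjk
    · obtain ⟨l, hl, hjl, hkl, hil⟩ := exists_tvAdm_of_abs_sub_le hj hk hj₁ hj₂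
        h4.swap₂₃ h5.swap₂₃ h6 h7 hkj hij
      exact ⟨l, hl, hil, hjl, hkl⟩
    · exact largest_k (hij.trans hjk) hjk

/-- Condition (iii) of strong irreducibility for the Turaev–Viro datum of order `r`. -/
theorem tv_strong_irreducibility_iii (r : ℕ) (hr : 3 ≤ r)
    (i j k i₁ i₂ j₁ j₂ k₁ k₂ : ℚ)
    (hi : TVColor r i) (hj : TVColor r j) (hk : TVColor r k)
    (hi₁ : TVColor r i₁) (hi₂ : TVColor r i₂) (hj₁ : TVColor r j₁)
    (hj₂ : TVColor r j₂) (hk₁ : TVColor r k₁) (hk₂ : TVColor r k₂)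
    (h1 : TVAdm r i j k) (h2 : TVAdm r i i₁ k₁) (h3 : TVAdm r i i₂ k₂)
    (h4 : TVAdm r j i₁ j₁) (h5 : TVAdm r j i₂ j₂)
    (h6 : TVAdm r k j₁ k₁) (h7 : TVAdm r k j₂ k₂) :
    ∃ l : ℚ, TVColor r l ∧ TVAdm r i₁ i₂ l ∧ TVAdm r j₁ j₂ l ∧ TVAdm r k₁ k₂ l :=
  tv_strong_irreducibility_iii_general r i j k i₁ i₂ j₁ j₂ k₁ k₂ hi hj hk hi₁ hi₂ hj₁ hj₂ hk₁ hk₂ h2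
    h3 h4 h5 h6 h7
end

section
/- Consider an abstract Turaev-Viro initial datum over a commutative ring K: a finite color set I, weights w_i ∈ K*, a set of admissible triples, and 6j-symbols with tetrahedral symmetries, satisfying the orthogonality condition (*), the Biedenharn-Elliot identity (**), and condition (****): Σ_k w_k = w_i w_j (sum over k with (i,j,k) admissible) for all i,j. Then for any admissible triples (i,i',i'') and (j,j',j''): Σ_{k,l,m,n} w_k w_l w_m w_n · |i'' j' l; j k j''| · |i'' j' l; m i i'| · |i i'' i'; j'' n k| · |m j' i'; j'' n j| · |i l m; j n k| = 1, with the sum over all k,l,m,n such that all involved symbols are defined. -/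
/-- A 6-tuple is admissible iff its four boundary triples are admissible. -/
abbrev Adm6 {I : Type*} (adm : I → I → I → Prop) (i j k l m n : I) : Prop :=
  adm i j k ∧ adm i m n ∧ adm j l n ∧ adm k l m

/-!
Summing first over `n` with the Biedenharn–Elliott identity (**) turns the five-symbol sum into
`∑ l, w l * (∑ k, w k * |i'' j' l; j k j''|²) * (∑ m, w m * |i'' j' l; m i i'|²)`.
By orthogonality (*) the two inner sums are `w j'⁻¹` and `w i''⁻¹` when `(i'', j', l)` is
admissible, and (****) gives `∑ l, w l = w i'' * w j'` over those `l`.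

Admissibility of triples is not assumed symmetric, but this follows from the axioms: (****) gives
a colour `d` with `(a, a, d)` admissible, orthogonality at `(a, a, d, b, c)` then yields an
admissible tetrahedron with nonzero symbol, and (**) applied to its square forces the
tetrahedron `(b, a, c, c, n, b)` to be admissible for some `n`.
-/

namespace TuraevViro

open Finset

theorem adm6_swap {I : Type*} {adm : I → I → I → Prop} (h12 : ∀ a b c, adm a b c → adm b a c)
    (h23 : ∀ a b c, adm a b c → adm a c b) {i j k l m n : I} (h : Adm6 adm i j k l m n) :
    Adm6 adm j i k m l n :=
  ⟨h12 _ _ _ h.1, h.2.2.1, h.2.1, h23 _ _ _ h.2.2.2⟩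

variable {K : Type*} [CommRing K] {I : Type*} [Fintype I]
  (w : I → Kˣ) (adm : I → I → I → Prop) [∀ a b c, Decidable (adm a b c)]
  (S : I → I → I → I → I → I → K)

def Orthogonality [DecidableEq I] : Prop :=
  ∀ i' i'' j k l n : I, adm i' j k → adm i' l n → adm i'' j k → adm i'' l n →
    ∑ m ∈ univ.filter (fun m => Adm6 adm i' j k m l n ∧ Adm6 adm i'' j k m l n),
      (w m : K) * S i' j k m l n * S i'' j k m l n =
    if i' = i'' then (((w i')⁻¹ : Kˣ) : K) else 0

def BiedenharnElliott : Prop :=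
  ∀ k k' k'' j j' j'' i i' i'' : I,
    Adm6 adm k k' k'' j j' j'' → Adm6 adm k k' k'' i i' i'' →
    S k k' k'' j j' j'' * S k k' k'' i i' i'' =
      ∑ n ∈ univ.filter (fun n => Adm6 adm j' k j'' i'' n i' ∧
          Adm6 adm j k' j'' i'' n i ∧ Adm6 adm j k'' j' i' n i),
        (w n : K) * S j' k j'' i'' n i' * S j k' j'' i'' n i * S j k'' j' i' n i

def WeightSumRule : Prop :=
  ∀ i j : I, ∑ k ∈ univ.filter (fun k => adm i j k), (w k : K) = (w i : K) * (w j : K)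

variable {w adm S}

theorem exists_adm [Nontrivial K] (hW : WeightSumRule w adm) (a b : I) : ∃ c, adm a b c := by
  by_contra! h
  have hsum := hW a b
  rw [filter_false_of_mem fun c _ => h c, sum_empty] at hsum
  exact (w a * w b).ne_zero (by push_cast; exact hsum.symm)

theorem sum_filter_symbol_sq [DecidableEq I] (hO : Orthogonality w adm S) {a b c e f : I}
    (habc : adm a b c) (haef : adm a e f) :
    ∑ m ∈ univ.filter (fun m => Adm6 adm a b c m e f),
      (w m : K) * S a b c m e f * S a b c m e f = (((w a)⁻¹ : Kˣ) : K) := by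
  simpa using hO a a b c e f habc haef habc haef

theorem exists_adm6_symbol_sq_ne_zero [DecidableEq I] [Nontrivial K]
    (hO : Orthogonality w adm S) {a b c d : I} (hd : adm a a d) (h : adm a b c) :
    ∃ m, Adm6 adm a a d m b c ∧ S a a d m b c * S a a d m b c ≠ 0 := by
  have hsum := sum_filter_symbol_sq hO hd h
  obtain ⟨m, hm, hne⟩ := exists_ne_zero_of_sum_ne_zero (hsum ▸ (w a)⁻¹.ne_zero)
  exact ⟨m, (mem_filter.mp hm).2, fun h0 => hne (by rw [mul_assoc, h0, mul_zero])⟩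

theorem adm_swap [DecidableEq I] [Nontrivial K] (hO : Orthogonality w adm S)
    (hBE : BiedenharnElliott w adm S) (hW : WeightSumRule w adm) {a b c : I} (h : adm a b c) :
    adm b a c ∧ adm a c b := by
  obtain ⟨d, hd⟩ := exists_adm hW a a
  obtain ⟨m, hm, hS⟩ := exists_adm6_symbol_sq_ne_zero hO hd h
  rw [hBE a a d m b c m b c hm hm] at hS
  obtain ⟨n, hn, -⟩ := exists_ne_zero_of_sum_ne_zero hS
  obtain ⟨hbac, -, hacb, -⟩ := (mem_filter.mp hn).2.1
  exact ⟨hbac, hacb⟩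

section FiveTerm

variable (w adm S) (i i' i'' j j' j'' : I)

def fiveTerm (k l m n : I) : K :=
  if Adm6 adm i'' j' l j k j'' ∧ Adm6 adm i'' j' l m i i' ∧
      Adm6 adm i i'' i' j'' n k ∧ Adm6 adm m j' i' j'' n j ∧ Adm6 adm i l m j n k then
    (w k : K) * (w l : K) * (w m : K) * (w n : K) *
      S i'' j' l j k j'' * S i'' j' l m i i' * S i i'' i' j'' n k * S m j' i' j'' n j *
      S i l m j n k
  else 0

variable {w adm S}

theorem sum_fiveTerm_eq (h12 : ∀ a b c, adm a b c → adm b a c)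
    (h23 : ∀ a b c, adm a b c → adm a c b) (hswap : ∀ i j k l m n, S i j k l m n = S j i k m l n)
    (hBE : BiedenharnElliott w adm S) (k l m : I) :
    ∑ n, fiveTerm w adm S i i' i'' j j' j'' k l m n =
      (w l : K) *
        (if Adm6 adm i'' j' l j k j'' then (w k : K) * S i'' j' l j k j'' * S i'' j' l j k j''
          else 0) *
        (if Adm6 adm i'' j' l m i i' then (w m : K) * S i'' j' l m i i' * S i'' j' l m i i'
          else 0) := by
  by_cases hC : Adm6 adm i'' j' l j k j'' ∧ Adm6 adm i'' j' l m i i'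
  · obtain ⟨hC1, hC2⟩ := hC
    have hbe := hBE j' i'' l i m i' k j j'' (adm6_swap h12 h23 hC2) (adm6_swap h12 h23 hC1)
    rw [hswap j' i'' l i m i', hswap j' i'' l k j j'', sum_filter] at hbe
    have hterm : ∀ n, fiveTerm w adm S i i' i'' j j' j'' k l m n =
        (w k : K) * (w l : K) * (w m : K) * S i'' j' l j k j'' * S i'' j' l m i i' *
          if Adm6 adm m j' i' j'' n j ∧ Adm6 adm i i'' i' j'' n k ∧ Adm6 adm i l m j n k then
            (w n : K) * S m j' i' j'' n j * S i i'' i' j'' n k * S i l m j n k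
          else 0 := by
      intro n
      by_cases hn : Adm6 adm m j' i' j'' n j ∧ Adm6 adm i i'' i' j'' n k ∧ Adm6 adm i l m j n k
      · rw [fiveTerm, if_pos ⟨hC1, hC2, hn.2.1, hn.1, hn.2.2⟩, if_pos hn]
        ring
      · rw [fiveTerm, if_neg fun h => hn ⟨h.2.2.2.1, h.2.2.1, h.2.2.2.2⟩, if_neg hn, mul_zero]
    simp only [hterm, ← mul_sum, ← hbe, if_pos hC1, if_pos hC2]
    ring
  · have hterm : ∀ n, fiveTerm w adm S i i' i'' j j' j'' k l m n = 0 :=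
      fun n => if_neg fun h => hC ⟨h.1, h.2.1⟩
    simp only [hterm, sum_const_zero]
    rcases not_and_or.mp hC with h | h <;> simp [h]

theorem sum_sum_sum_fiveTerm_eq [DecidableEq I] (hO : Orthogonality w adm S)
    (h12 : ∀ a b c, adm a b c → adm b a c) (h23 : ∀ a b c, adm a b c → adm a c b)
    (hswap : ∀ i j k l m n, S i j k l m n = S j i k m l n) (hBE : BiedenharnElliott w adm S)
    (hii : adm i'' i i') (hjj : adm j' j j'') (l : I) :
    ∑ k, ∑ m, ∑ n, fiveTerm w adm S i i' i'' j j' j'' k l m n =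
      if adm i'' j' l then (w l : K) * (((w j')⁻¹ : Kˣ) : K) * (((w i'')⁻¹ : Kˣ) : K) else 0 := by
  simp only [sum_fiveTerm_eq i i' i'' j j' j'' h12 h23 hswap hBE]
  rw [← sum_mul_sum, ← mul_sum]
  by_cases hl : adm i'' j' l
  · have hk : ∑ k, (if Adm6 adm i'' j' l j k j'' then
          (w k : K) * S i'' j' l j k j'' * S i'' j' l j k j'' else 0) = (((w j')⁻¹ : Kˣ) : K) := by
      rw [← sum_filter_symbol_sq hO (h12 _ _ _ hl) hjj, sum_filter]
      refine sum_congr rfl fun k _ => ?_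
      rw [hswap i'' j' l j k j'']
      exact if_congr ⟨adm6_swap h12 h23, adm6_swap h12 h23⟩ rfl rfl
    have hm : ∑ m, (if Adm6 adm i'' j' l m i i' then
          (w m : K) * S i'' j' l m i i' * S i'' j' l m i i' else 0) = (((w i'')⁻¹ : Kˣ) : K) := by
      rw [← sum_filter]
      exact sum_filter_symbol_sq hO hl hii
    rw [hk, hm, if_pos hl]
  · simp [Adm6, hl]

end FiveTerm

end TuraevViro

/-- Lemma "five-eq": for an abstract Turaev–Viro initial datum (finite color set `I`,
unit weights `w`, admissible triples, 6j-symbols with tetrahedral symmetries)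
satisfying orthogonality (*), the Biedenharn–Elliot identity (**), and
condition (****), the displayed five-symbol state sum equals `1`. -/
theorem five_eq {K : Type*} [CommRing K] {I : Type*} [Fintype I] [DecidableEq I]
    (w : I → Kˣ) (adm : I → I → I → Prop) [∀ a b c, Decidable (adm a b c)]
    (S : I → I → I → I → I → I → K)
    (hsym : ∀ i j k l m n : I,
      S i j k l m n = S j i k m l n ∧ S i j k l m n = S i k j l n m ∧
      S i j k l m n = S i m n l j k ∧ S i j k l m n = S l m k i j n ∧
      S i j k l m n = S l j n i m k)
    (horth : ∀ i' i'' j k l n : I, adm i' j k → adm i' l n → adm i'' j k → adm i'' l n →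
      ∑ m ∈ Finset.univ.filter
          (fun m => Adm6 adm i' j k m l n ∧ Adm6 adm i'' j k m l n),
        (w m : K) * S i' j k m l n * S i'' j k m l n =
      if i' = i'' then (((w i')⁻¹ : Kˣ) : K) else 0)
    (hBE : ∀ k k' k'' j j' j'' i i' i'' : I,
      Adm6 adm k k' k'' j j' j'' → Adm6 adm k k' k'' i i' i'' →
      S k k' k'' j j' j'' * S k k' k'' i i' i'' =
        ∑ n ∈ Finset.univ.filter (fun n => Adm6 adm j' k j'' i'' n i' ∧
            Adm6 adm j k' j'' i'' n i ∧ Adm6 adm j k'' j' i' n i),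
          (w n : K) * S j' k j'' i'' n i' * S j k' j'' i'' n i * S j k'' j' i' n i)
    (hstar4 : ∀ i j : I,
      ∑ k ∈ Finset.univ.filter (fun k => adm i j k), (w k : K) = (w i : K) * (w j : K))
    (i i' i'' j j' j'' : I) (h1 : adm i i' i'') (h2 : adm j j' j'') :
    ∑ x ∈ (Finset.univ : Finset (I × I × I × I)).filter
        (fun x => Adm6 adm i'' j' x.2.1 j x.1 j'' ∧ Adm6 adm i'' j' x.2.1 x.2.2.1 i i' ∧
          Adm6 adm i i'' i' j'' x.2.2.2 x.1 ∧ Adm6 adm x.2.2.1 j' i' j'' x.2.2.2 j ∧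
          Adm6 adm i x.2.1 x.2.2.1 j x.2.2.2 x.1),
      (w x.1 : K) * (w x.2.1 : K) * (w x.2.2.1 : K) * (w x.2.2.2 : K) *
        S i'' j' x.2.1 j x.1 j'' * S i'' j' x.2.1 x.2.2.1 i i' *
        S i i'' i' j'' x.2.2.2 x.1 * S x.2.2.1 j' i' j'' x.2.2.2 j *
        S i x.2.1 x.2.2.1 j x.2.2.2 x.1 = 1 := by
  rcases subsingleton_or_nontrivial K with _ | _
  · exact Subsingleton.elim _ _
  have hswap : ∀ i j k l m n, S i j k l m n = S j i k m l n :=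
    fun i j k l m n => (hsym i j k l m n).1
  have h12 : ∀ a b c, adm a b c → adm b a c := fun _ _ _ h =>
    (TuraevViro.adm_swap horth hBE hstar4 h).1
  have h23 : ∀ a b c, adm a b c → adm a c b := fun _ _ _ h =>
    (TuraevViro.adm_swap horth hBE hstar4 h).2
  have hii : adm i'' i i' := h23 _ _ _ (h12 _ _ _ (h23 _ _ _ (h12 _ _ _ h1)))
  calc _ = ∑ l, ∑ k, ∑ m, ∑ n, TuraevViro.fiveTerm w adm S i i' i'' j j' j'' k l m n := by
        rw [Finset.sum_filter]
        simp only [Fintype.sum_prod_type]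
        exact Finset.sum_comm
    _ = ∑ l ∈ Finset.univ.filter (adm i'' j'),
          (w l : K) * (((w j')⁻¹ : Kˣ) : K) * (((w i'')⁻¹ : Kˣ) : K) := by
        rw [Finset.sum_filter]
        exact Finset.sum_congr rfl fun l _ => TuraevViro.sum_sum_sum_fiveTerm_eq i i' i'' j j' j''
          horth h12 h23 hswap hBE hii (h12 _ _ _ h2) l
    _ = 1 := by
        rw [← Finset.sum_mul, ← Finset.sum_mul, hstar4]
        simp
end

section
/- For an integer r ≥ 3 and a primitive-type root of unity q of degree 2r (with q² a primitive r-th root of unity), the quantum integer [n] = (qⁿ − q^{-n})/(q − q^{-1}) satisfies: (w_i w_j)^{-1} = |0 i i; k j j|², equivalently Σ_k w_k/(w_i w_j) = 1 summed over all k ∈ {0,1/2,...,(r-2)/2} such that (i,j,k) is admissible, where w_i = (-1)^{2i}[2i+1]; i.e., Σ_k (-1)^{2k}[2k+1] = (-1)^{2i+2j}[2i+1][2j+1] with the sum over admissible k. -/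
/-- The quantum integer `[n] = (qⁿ - q⁻ⁿ)/(q - q⁻¹)`. -/
noncomputable def qInt (q : ℂ) (n : ℤ) : ℂ := (q ^ n - q ^ (-n)) / (q - q⁻¹)

/-- `2x` as an integer, for a half-integer `x` (so that `2x ∈ ℤ`). -/
def twiceZ (x : ℚ) : ℤ := (2 * x).num

/-- The weight `w_i = (-1)^{2i} [2i+1]` of the Turaev–Viro datum. -/
noncomputable def tvW (q : ℂ) (x : ℚ) : ℂ :=
  (-1 : ℂ) ^ (twiceZ x) * qInt q (twiceZ x + 1)

/-- The color set `{0, 1/2, ..., (r-2)/2}` as a finite set of rationals. -/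
def tvColors (r : ℕ) : Finset ℚ := (Finset.range (r - 1)).image (fun a : ℕ => (a : ℚ) / 2)

/-!
Write `c = 2k` for doubled colours. For `a = 2i ≤ b = 2j` the admissible `c` are
`b - a, b - a + 2, …` up to `min (a + b) (2r - 4 - a - b)`, all of the parity of `a + b`, which accounts
for the signs. Multiplied by `(q - q⁻¹)²`, each `[c + 1]` becomes a difference
`(q^(c+2) + q^-(c+2)) - (q^c + q^-c)`, so the sum telescopes, and so does the product
`(q - q⁻¹)² [a + 1] [b + 1] = (q^(a+b+2) + q^-(a+b+2)) - (q^(b-a) + q^(a-b))` (quantum Clebsch–Gordan).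
When the truncation at `2r - 4 - a - b` is active, the top end `2r - (a + b + 2)` gives the same
value of `qᵐ + q⁻ᵐ` because `q ^ (2r) = 1`.
-/

open Finset

noncomputable def qTrace (q : ℂ) (n : ℤ) : ℂ := q ^ n + q ^ (-n)

/-- Admissibility of doubled colours `a = 2i`, `b = 2j`, `c = 2k`. -/
def TVAdmNat (r a b c : ℕ) : Prop :=
  a ≤ b + c ∧ b ≤ c + a ∧ c ≤ a + b ∧ 2 ∣ a + b + c ∧ a + b + c + 4 ≤ 2 * r

instance (r a b : ℕ) : DecidablePred (TVAdmNat r a b) := fun c => by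
  unfold TVAdmNat; infer_instance

section QuantumIntegers

variable {q : ℂ}

lemma qTrace_neg (n : ℤ) : qTrace q (-n) = qTrace q n := by
  rw [qTrace, qTrace, neg_neg, add_comm]

lemma qTrace_sub_of_pow_eq_one {N : ℕ} (hq0 : q ≠ 0) (hN : q ^ N = 1) (n : ℤ) :
    qTrace q (N - n) = qTrace q n := by
  have hN' : q ^ (N : ℤ) = 1 := by rw [zpow_natCast, hN]
  rw [qTrace, qTrace, zpow_sub₀ hq0, neg_sub, zpow_sub₀ hq0, hN', zpow_neg, one_div, ← zpow_neg,
    div_one, add_comm]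

lemma sub_inv_ne_zero (hq0 : q ≠ 0) (hq : q ^ 2 ≠ 1) : q - q⁻¹ ≠ 0 := by
  rw [sub_ne_zero]
  rintro h
  apply hq
  rw [sq]
  nth_rewrite 2 [h]
  exact mul_inv_cancel₀ hq0

lemma sub_inv_mul_qInt (hD : q - q⁻¹ ≠ 0) (n : ℤ) :
    (q - q⁻¹) * qInt q n = q ^ n - q ^ (-n) :=
  mul_div_cancel₀ _ hD

lemma sub_inv_sq_mul_qInt (hq0 : q ≠ 0) (hD : q - q⁻¹ ≠ 0) (n : ℤ) :
    (q - q⁻¹) ^ 2 * qInt q (n + 1) = qTrace q (n + 2) - qTrace q n := by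
  rw [sq, mul_assoc, sub_inv_mul_qInt hD]
  simp only [qTrace, neg_add, zpow_add₀ hq0, zpow_neg, zpow_one, zpow_two]
  field_simp
  ring

lemma sub_inv_sq_mul_qInt_mul_qInt (hq0 : q ≠ 0) (hD : q - q⁻¹ ≠ 0) (m n : ℤ) :
    (q - q⁻¹) ^ 2 * (qInt q m * qInt q n) = qTrace q (m + n) - qTrace q (m - n) := by
  rw [show (q - q⁻¹) ^ 2 * (qInt q m * qInt q n)
      = ((q - q⁻¹) * qInt q m) * ((q - q⁻¹) * qInt q n) by ring,
    sub_inv_mul_qInt hD, sub_inv_mul_qInt hD]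
  simp only [qTrace, neg_add, neg_sub, zpow_add₀ hq0, zpow_sub₀ hq0, zpow_neg]
  field_simp
  ring

lemma sub_inv_sq_mul_sum_qInt (hq0 : q ≠ 0) (hD : q - q⁻¹ ≠ 0) (d : ℤ) (T : ℕ) :
    (q - q⁻¹) ^ 2 * ∑ t ∈ range T, qInt q (d + 2 * t + 1)
      = qTrace q (d + 2 * T) - qTrace q d := by
  rw [mul_sum]
  calc ∑ t ∈ range T, (q - q⁻¹) ^ 2 * qInt q (d + 2 * t + 1)
      = ∑ t ∈ range T, (qTrace q (d + 2 * (t + 1 : ℕ)) - qTrace q (d + 2 * t)) := by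
        refine sum_congr rfl fun t _ => ?_
        rw [sub_inv_sq_mul_qInt hq0 hD]
        push_cast
        ring_nf
    _ = qTrace q (d + 2 * T) - qTrace q d := by
        rw [sum_range_sub (fun t : ℕ => qTrace q (d + 2 * t))]
        simp

/-- Quantum Clebsch–Gordan, with the number `T` of summands left free: the natural choice is
`T = a + 1`, but any `T` reaching the same value of `qTrace` at the top end works. -/
lemma sum_range_qInt_eq_qInt_mul_qInt (hq0 : q ≠ 0) (hD : q - q⁻¹ ≠ 0) (a b : ℤ) (T : ℕ)
    (hT : qTrace q (b - a + 2 * T) = qTrace q (a + b + 2)) :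
    ∑ t ∈ range T, qInt q (b - a + 2 * t + 1) = qInt q (a + 1) * qInt q (b + 1) := by
  apply mul_left_cancel₀ (pow_ne_zero 2 hD)
  rw [sub_inv_sq_mul_sum_qInt hq0 hD, sub_inv_sq_mul_qInt_mul_qInt hq0 hD, hT,
    ← qTrace_neg (b - a)]
  ring_nf

end QuantumIntegers


section DoubledColours

variable {r a b c : ℕ}

lemma tvAdmNat_comm : TVAdmNat r a b c ↔ TVAdmNat r b a c := by
  unfold TVAdmNat; omega

lemma neg_one_pow_of_tvAdmNat (h : TVAdmNat r a b c) :
    (-1 : ℂ) ^ c = (-1) ^ a * (-1) ^ b := by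
  obtain ⟨k, hk⟩ : ∃ k, a + b = c + 2 * k := ⟨(a + b - c) / 2, by unfold TVAdmNat at h; omega⟩
  rw [← pow_add, hk, pow_add, pow_mul, neg_one_sq, one_pow, mul_one]

lemma filter_tvAdmNat_eq_image (hab : a ≤ b) (hb : b + 2 ≤ r) :
    (range (r - 1)).filter (TVAdmNat r a b)
      = (range (min (a + 1) (r - 1 - b))).image (fun t => b - a + 2 * t) := by
  ext c
  simp only [mem_filter, mem_range, mem_image, TVAdmNat]
  constructor
  · rintro ⟨hc, h₁, h₂, h₃, ⟨k, hk⟩, h₄⟩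
    exact ⟨(c - (b - a)) / 2, by omega, by omega⟩
  · rintro ⟨t, ht, rfl⟩
    omega

variable {q : ℂ} (hq0 : q ≠ 0) (hD : q - q⁻¹ ≠ 0) (hq : q ^ (2 * r) = 1)
include hq0 hD hq

lemma sum_qInt_tvAdmNat_of_le (hab : a ≤ b) (hb : b + 2 ≤ r) :
    ∑ c ∈ (range (r - 1)).filter (TVAdmNat r a b), qInt q (c + 1)
      = qInt q (a + 1) * qInt q (b + 1) := by
  rw [filter_tvAdmNat_eq_image hab hb, sum_image (fun s _ t _ h => by omega)]
  have hcast (t : ℕ) : ((b - a + 2 * t : ℕ) : ℤ) = b - a + 2 * t := by omega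
  simp only [hcast]
  apply sum_range_qInt_eq_qInt_mul_qInt hq0 hD
  rcases le_total (a + 1) (r - 1 - b) with hT | hT
  · rw [min_eq_left hT]
    congr 1
    push_cast
    ring
  · have htop : (b : ℤ) - a + 2 * (min (a + 1) (r - 1 - b) : ℕ) = (2 * r : ℕ) - (a + b + 2) := by
      rw [min_eq_right hT]; omega
    rw [htop, qTrace_sub_of_pow_eq_one hq0 hq]

lemma sum_qInt_tvAdmNat (ha : a + 2 ≤ r) (hb : b + 2 ≤ r) :
    ∑ c ∈ (range (r - 1)).filter (TVAdmNat r a b), qInt q (c + 1)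
      = qInt q (a + 1) * qInt q (b + 1) := by
  rcases le_total a b with hab | hba
  · exact sum_qInt_tvAdmNat_of_le hq0 hD hq hab hb
  · rw [filter_congr fun c _ => tvAdmNat_comm, mul_comm]
    exact sum_qInt_tvAdmNat_of_le hq0 hD hq hba ha

lemma sum_signed_qInt_tvAdmNat (ha : a + 2 ≤ r) (hb : b + 2 ≤ r) :
    ∑ c ∈ (range (r - 1)).filter (TVAdmNat r a b), (-1 : ℂ) ^ c * qInt q (c + 1)
      = ((-1) ^ a * qInt q (a + 1)) * ((-1) ^ b * qInt q (b + 1)) := by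
  rw [sum_congr rfl fun c hc => by rw [neg_one_pow_of_tvAdmNat (mem_filter.mp hc).2],
    ← mul_sum, sum_qInt_tvAdmNat hq0 hD hq ha hb]
  ring

end DoubledColours

lemma TVColor.exists_eq_half {r : ℕ} {x : ℚ} (h : TVColor r x) :
    ∃ a : ℕ, x = a / 2 ∧ a + 2 ≤ r := by
  obtain ⟨⟨a, rfl⟩, hle⟩ := h
  refine ⟨a, rfl, ?_⟩
  have : (a : ℚ) + 2 ≤ r := by linarith
  exact_mod_cast this

lemma tvAdm_half_iff {r a b c : ℕ} :
    TVAdm r (a / 2) (b / 2) (c / 2) ↔ TVAdmNat r a b c := by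
  have hsum : ((a : ℚ) / 2 + b / 2 + c / 2) = ((a + b + c : ℕ) : ℚ) / 2 := by push_cast; ring
  have hdvd : (∃ n : ℕ, ((a + b + c : ℕ) : ℚ) / 2 = n) ↔ 2 ∣ a + b + c := by
    refine ⟨fun ⟨n, hn⟩ => ⟨n, ?_⟩, fun ⟨n, hn⟩ => ⟨n, ?_⟩⟩
    · rw [div_eq_iff two_ne_zero, mul_comm] at hn
      exact_mod_cast hn
    · rw [hn]; push_cast; ring
  rw [TVAdm, TVAdmNat, hsum, hdvd]
  constructor <;> rintro ⟨h₁, h₂, h₃, h₄, h₅⟩ <;> refine ⟨?_, ?_, ?_, h₄, ?_⟩ <;> qify at * <;> linarith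

lemma tvW_half (q : ℂ) (n : ℕ) : tvW q (n / 2) = (-1) ^ n * qInt q (n + 1) := by
  rw [tvW, twiceZ, mul_div_cancel₀ _ two_ne_zero, Rat.num_natCast, zpow_natCast]

lemma sum_filter_tvColors {r : ℕ} (p : ℚ → Prop) [DecidablePred p] (f : ℚ → ℂ) :
    ∑ k ∈ (tvColors r).filter p, f k
      = ∑ c ∈ (range (r - 1)).filter (fun c : ℕ => p (c / 2)), f (c / 2) := by
  rw [tvColors, filter_image, sum_image fun x _ y _ h => by simpa using h]

open Classical in
theorem tv_condition_four_star_general (r : ℕ) (q : ℂ)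
    (hq2 : IsPrimitiveRoot (q ^ 2) r)
    (i j : ℚ) (hi : TVColor r i) (hj : TVColor r j) :
    ∑ k ∈ (tvColors r).filter (fun k => TVAdm r i j k), tvW q k = tvW q i * tvW q j := by
  obtain ⟨a, rfl, ha⟩ := hi.exists_eq_half
  obtain ⟨b, rfl, hb⟩ := hj.exists_eq_half
  have hq0 : q ≠ 0 := (pow_ne_zero_iff two_ne_zero).mp (hq2.ne_zero (by omega))
  have hD : q - q⁻¹ ≠ 0 := sub_inv_ne_zero hq0 (hq2.ne_one (by omega))
  have hq : q ^ (2 * r) = 1 := by rw [pow_mul, hq2.pow_eq_one]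
  rw [sum_filter_tvColors, filter_congr fun c _ => tvAdm_half_iff]
  simp only [tvW_half]
  exact sum_signed_qInt_tvAdmNat hq0 hD hq ha hb

open Classical in
/-- Condition (****) for the Turaev–Viro datum of order `r`:
`Σ_k (-1)^{2k}[2k+1] = (-1)^{2i+2j}[2i+1][2j+1]`, the sum being over all colors `k`
with `(i,j,k)` admissible. -/
theorem tv_condition_four_star (r : ℕ) (hr : 3 ≤ r) (q : ℂ)
    (hq : q ^ (2 * r) = 1) (hq2 : IsPrimitiveRoot (q ^ 2) r)
    (i j : ℚ) (hi : TVColor r i) (hj : TVColor r j) :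
    ∑ k ∈ (tvColors r).filter (fun k => TVAdm r i j k), tvW q k = tvW q i * tvW q j :=
  tv_condition_four_star_general r q hq2 i j hi hj
end

section
/- Let ε ∈ ℂ with ε² = ε + 1, weights w_0 = 1, w_1 = ε, and 6j-symbols |0 0 0; 0 0 0| = 1, |0 0 0; 1 1 1| = ε^{-1/2}, |0 1 1; 0 1 1| = ε^{-1}, |0 1 1; 1 1 1| = ε^{-1}, |1 1 1; 1 1 1| = -ε^{-2}. Then w_0·|1 1 1; 0 1 1|² + w_1·|1 1 1; 1 1 1|² = ε^{-1}, and |0 1 1; 0 1 1|·|1 1 1; 0 1 1| + w_1·|0 1 1; 1 1 1|·|1 1 1; 1 1 1| = 0. -/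
/-- Admissibility of a triple of colors in `{0,1}` (triangle inequalities). -/
abbrev EpsAdm (i j k : Fin 2) : Prop :=
  (i : ℕ) ≤ (j : ℕ) + (k : ℕ) ∧ (j : ℕ) ≤ (k : ℕ) + (i : ℕ) ∧ (k : ℕ) ≤ (i : ℕ) + (j : ℕ)

/-- Admissibility of a 6-tuple: the four boundary triples of the tetrahedron are admissible. -/
abbrev EpsAdm6 (i j k l m n : Fin 2) : Prop :=
  EpsAdm i j k ∧ EpsAdm i m n ∧ EpsAdm j l n ∧ EpsAdm k l m

/-- The weights of the ε-datum: `w 0 = 1`, `w 1 = ε`. -/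
def epsW (ε : ℂ) (i : Fin 2) : ℂ := if i = 0 then 1 else ε

/-- The 6j-symbols `|i j k; l m n|` of the ε-datum, where `h` is a fixed square root
of `ε`.  On admissible 6-tuples the value depends only on the number of colors equal
to `1`, which realizes the five listed values together with their tetrahedral
symmetries:  `|0 0 0; 0 0 0| = 1`, `|0 0 0; 1 1 1| = ε^{-1/2}`,
`|0 1 1; 0 1 1| = ε⁻¹`, `|0 1 1; 1 1 1| = ε⁻¹`, `|1 1 1; 1 1 1| = -ε⁻²`. -/
noncomputable def epsSym (ε h : ℂ) (i j k l m n : Fin 2) : ℂ :=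
  let t : ℕ := (i : ℕ) + (j : ℕ) + (k : ℕ) + (l : ℕ) + (m : ℕ) + (n : ℕ)
  if t = 0 then 1 else if t = 3 then h⁻¹ else if t = 6 then -(ε ^ 2)⁻¹ else ε⁻¹

section GoldenRatio

theorem ne_zero_of_sq_eq_add_one {R : Type*} [Ring R] [Nontrivial R] {ε : R}
    (hε : ε ^ 2 = ε + 1) : ε ≠ 0 := by
  rintro rfl
  norm_num at hε

variable {K : Type*} [Field K] {ε : K}

theorem inv_add_inv_sq_of_sq_eq_add_one (hε : ε ^ 2 = ε + 1) : ε⁻¹ + ε⁻¹ ^ 2 = 1 := by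
  have hne := ne_zero_of_sq_eq_add_one hε
  field_simp
  linear_combination -hε

end GoldenRatio

section EpsSymValues

variable (ε h : ℂ)

@[simp] theorem epsW_zero : epsW ε 0 = 1 := rfl

@[simp] theorem epsW_one : epsW ε 1 = ε := rfl

@[simp] theorem epsSym_one_one_one_zero_one_one : epsSym ε h 1 1 1 0 1 1 = ε⁻¹ := rfl

@[simp] theorem epsSym_zero_one_one_zero_one_one : epsSym ε h 0 1 1 0 1 1 = ε⁻¹ := rfl

@[simp] theorem epsSym_zero_one_one_one_one_one : epsSym ε h 0 1 1 1 1 1 = ε⁻¹ := rfl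

@[simp] theorem epsSym_one_one_one_one_one_one : epsSym ε h 1 1 1 1 1 1 = -(ε ^ 2)⁻¹ := rfl

end EpsSymValues

theorem eps_orthogonality_key_cases_general (ε h : ℂ) (hε : ε ^ 2 = ε + 1) :
    epsW ε 0 * (epsSym ε h 1 1 1 0 1 1) ^ 2 + epsW ε 1 * (epsSym ε h 1 1 1 1 1 1) ^ 2 = ε⁻¹ ∧
    epsSym ε h 0 1 1 0 1 1 * epsSym ε h 1 1 1 0 1 1 +
      epsW ε 1 * epsSym ε h 0 1 1 1 1 1 * epsSym ε h 1 1 1 1 1 1 = 0 := by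
  have hne := ne_zero_of_sq_eq_add_one hε
  simp only [epsW_zero, epsW_one, epsSym_one_one_one_zero_one_one,
    epsSym_zero_one_one_zero_one_one, epsSym_zero_one_one_one_one_one,
    epsSym_one_one_one_one_one_one]
  constructor
  · calc 1 * ε⁻¹ ^ 2 + ε * (-(ε ^ 2)⁻¹) ^ 2 = ε⁻¹ * (ε⁻¹ + ε⁻¹ ^ 2) := by field_simp
      _ = ε⁻¹ := by rw [inv_add_inv_sq_of_sq_eq_add_one hε, mul_one]
  · field_simp
    ring

/-- Two key instances of the orthogonality condition (*) for the ε-datum: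
`w₀·|1 1 1; 0 1 1|² + w₁·|1 1 1; 1 1 1|² = ε⁻¹` and
`|0 1 1; 0 1 1|·|1 1 1; 0 1 1| + w₁·|0 1 1; 1 1 1|·|1 1 1; 1 1 1| = 0`. -/
theorem eps_orthogonality_key_cases (ε h : ℂ) (hε : ε ^ 2 = ε + 1) (hh : h ^ 2 = ε) :
    epsW ε 0 * (epsSym ε h 1 1 1 0 1 1) ^ 2 + epsW ε 1 * (epsSym ε h 1 1 1 1 1 1) ^ 2 = ε⁻¹ ∧
    epsSym ε h 0 1 1 0 1 1 * epsSym ε h 1 1 1 0 1 1 +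
      epsW ε 1 * epsSym ε h 0 1 1 1 1 1 * epsSym ε h 1 1 1 1 1 1 = 0 :=
  eps_orthogonality_key_cases_general ε h hε
end

section
/- Fix an integer r ≥ 3 and the set I = {0, 1/2, ..., (r-2)/2} with the Turaev-Viro admissibility (triangle inequalities, integral sum, sum ≤ r−2). If the seven triples (i,j,k), (i,i₁,k₁), (i,i₂,k₂), (j,i₁,j₁), (j,i₂,j₂), (k,j₁,k₁), (k,j₂,k₂) are admissible and k₁ − k₂ = max{|i₁−i₂|, |j₁−j₂|, |k₁−k₂|}, then k₁ − k₂ ≤ min{i₁+i₂, j₁+j₂, k₁+k₂} and k₁ − k₂ + max{i₁+i₂, j₁+j₂, k₁+k₂} ≤ r − 2. -/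
/-!
All bounds come from pairs of admissible triples `(a, b, c)`, `(a, x, c')` sharing their first
color: `c ≤ a + b` and `a ≤ x + c'` give `c - c' ≤ b + x`, and with `a + b + c ≤ r - 2` also
`c - c' + (b + x) ≤ r - 2`. The remaining bounds against `k₁ + k₂` use only that colors of an
admissible triple are nonnegative and at most half of `r - 2`.
-/

namespace TVAdm

variable {r : ℕ} {a b c x c' : ℚ}

theorem nonneg_right (h : TVAdm r a b c) : 0 ≤ c := by
  obtain ⟨hab, hbc, -⟩ := h
  linarith

theorem two_mul_le (h : TVAdm r a b c) : 2 * c ≤ (r : ℚ) - 2 := by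
  obtain ⟨-, -, hc, -, hsum⟩ := h
  linarith

theorem sub_le_add (h : TVAdm r a b c) (h' : TVAdm r a x c') : c - c' ≤ b + x := by
  obtain ⟨-, -, hc, -⟩ := h
  obtain ⟨ha, -⟩ := h'
  linarith

theorem sub_add_add_le (h : TVAdm r a b c) (h' : TVAdm r a x c') :
    c - c' + (b + x) ≤ (r : ℚ) - 2 := by
  obtain ⟨-, -, -, -, hsum⟩ := h
  obtain ⟨-, hx, -⟩ := h'
  linarith

end TVAdm

theorem tv_iii_inequalities_general (r : ℕ)
    (i k i₁ i₂ j₁ j₂ k₁ k₂ : ℚ)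
    (h2 : TVAdm r i i₁ k₁) (h3 : TVAdm r i i₂ k₂)
    (h6 : TVAdm r k j₁ k₁) (h7 : TVAdm r k j₂ k₂) :
    k₁ - k₂ ≤ min (i₁ + i₂) (min (j₁ + j₂) (k₁ + k₂)) ∧
      k₁ - k₂ + max (i₁ + i₂) (max (j₁ + j₂) (k₁ + k₂)) ≤ (r : ℚ) - 2 := by
  have hk_sub_le : k₁ - k₂ ≤ k₁ + k₂ := by linarith [h7.nonneg_right]
  have hk_sum_le : k₁ - k₂ + (k₁ + k₂) ≤ (r : ℚ) - 2 := by linarith [h6.two_mul_le]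
  refine ⟨le_min (h2.sub_le_add h3) (le_min (h6.sub_le_add h7) hk_sub_le), ?_⟩
  rw [← max_add_add_left, ← max_add_add_left]
  exact max_le (h2.sub_add_add_le h3) (max_le (h6.sub_add_add_le h7) hk_sum_le)

/-- The inequality core of condition (iii) of strong irreducibility for the
Turaev–Viro datum of order `r`. -/
theorem tv_iii_inequalities (r : ℕ) (hr : 3 ≤ r)
    (i j k i₁ i₂ j₁ j₂ k₁ k₂ : ℚ)
    (hi : TVColor r i) (hj : TVColor r j) (hk : TVColor r k)
    (hi₁ : TVColor r i₁) (hi₂ : TVColor r i₂) (hj₁ : TVColor r j₁)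
    (hj₂ : TVColor r j₂) (hk₁ : TVColor r k₁) (hk₂ : TVColor r k₂)
    (h1 : TVAdm r i j k) (h2 : TVAdm r i i₁ k₁) (h3 : TVAdm r i i₂ k₂)
    (h4 : TVAdm r j i₁ j₁) (h5 : TVAdm r j i₂ j₂)
    (h6 : TVAdm r k j₁ k₁) (h7 : TVAdm r k j₂ k₂)
    (hmax : k₁ - k₂ = max (|i₁ - i₂|) (max (|j₁ - j₂|) (|k₁ - k₂|))) :
    k₁ - k₂ ≤ min (i₁ + i₂) (min (j₁ + j₂) (k₁ + k₂)) ∧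
      k₁ - k₂ + max (i₁ + i₂) (max (j₁ + j₂) (k₁ + k₂)) ≤ (r : ℚ) - 2 :=
  tv_iii_inequalities_general r i k i₁ i₂ j₁ j₂ k₁ k₂ h2 h3 h6 h7
end
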